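/- For every δ > 0 there is a constant C_δ > 0 such that for all X ≥ 2, the number of fundamental discriminants d > 0 (not a perfect square) with ε_d ≤ X is at most C_δ·X^{1+δ}. -/
import Mathlib


/-- `t_d`: the least `t ≥ 1` such that `t² − d u² = 4` has a solution with `u ≥ 1`. -/
noncomputable def td (d : ℤ) : ℕ :=
  sInf {t : ℕ | 0 < t ∧ ∃ u : ℕ, 0 < u ∧ (t : ℤ) ^ 2 - d * (u : ℤ) ^ 2 = 4}

/-- `u_d`: the positive `u` corresponding to `t_d`. -/
noncomputable def ud (d : ℤ) : ℕ :=
  sInf {u : ℕ | 0 < u ∧ (td d : ℤ) ^ 2 - d * (u : ℤ) ^ 2 = 4}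

/-- `ε_d = (t_d + u_d √d)/2`, the fundamental solution of `t² − d u² = 4`. -/
noncomputable def eps (d : ℤ) : ℝ := ((td d : ℝ) + (ud d : ℝ) * Real.sqrt (d : ℝ)) / 2

/-- A positive fundamental discriminant: either squarefree and `≡ 1 (mod 4)`, or `4m` with
`m` squarefree and `m ≡ 2, 3 (mod 4)`. -/
def IsFundDisc (d : ℕ) : Prop :=
  (Squarefree d ∧ d % 4 = 1) ∨ (∃ m : ℕ, d = 4 * m ∧ Squarefree m ∧ (m % 4 = 2 ∨ m % 4 = 3))

lemma sqf_unique {a b u v : ℕ} (ha : Squarefree a) (hb : Squarefree b)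
    (hu : u ≠ 0) (hv : v ≠ 0) (h : a * u ^ 2 = b * v ^ 2) : a = b := by
  have ha0 : a ≠ 0 := ha.ne_zero
  have hb0 : b ≠ 0 := hb.ne_zero
  refine Nat.factorization_inj ha0 hb0 ?_
  ext p
  have hp := congrArg (fun n => n.factorization p) h
  simp only [Nat.factorization_mul ha0 (pow_ne_zero 2 hu),
    Nat.factorization_mul hb0 (pow_ne_zero 2 hv), Nat.factorization_pow,
    Finsupp.add_apply, Finsupp.smul_apply, smul_eq_mul] at hp
  have h1 := ha.natFactorization_le_one p
  have h2 := hb.natFactorization_le_one p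
  omega

/-- spec of td/ud for positive non-square d -/
lemma tdud_spec {d : ℤ} (hd0 : 0 < d) (hsq : ¬IsSquare d) :
    0 < td d ∧ 0 < ud d ∧ (td d : ℤ) ^ 2 - d * (ud d : ℤ) ^ 2 = 4 := by
  obtain ⟨x, y, hxy, hy⟩ := Pell.exists_of_not_isSquare hd0 hsq
  have hx2 : ((2 * x.natAbs : ℕ) : ℤ) ^ 2 = 4 * x ^ 2 := by
    push_cast [← Int.abs_eq_natAbs]; rw [mul_pow, sq_abs]; norm_num
  have hy2 : ((2 * y.natAbs : ℕ) : ℤ) ^ 2 = 4 * y ^ 2 := by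
    push_cast [← Int.abs_eq_natAbs]; rw [mul_pow, sq_abs]; norm_num
  have hxpos : 0 < 2 * x.natAbs := by
    rcases Nat.eq_zero_or_pos x.natAbs with h | h
    · exfalso; rw [Int.natAbs_eq_zero] at h; subst h
      have : d * y ^ 2 = -1 := by linarith
      nlinarith [sq_nonneg y, hd0]
    · omega
  have hypos : 0 < 2 * y.natAbs := by simp [Nat.pos_of_ne_zero, Int.natAbs_ne_zero, hy, Nat.pos_iff_ne_zero]
  have hmem : (2 * x.natAbs) ∈ {t : ℕ | 0 < t ∧ ∃ u : ℕ, 0 < u ∧ (t : ℤ) ^ 2 - d * (u : ℤ) ^ 2 = 4} := by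
    refine ⟨hxpos, 2 * y.natAbs, hypos, ?_⟩
    rw [hx2, hy2]; linarith
  have htd := Nat.sInf_mem ⟨_, hmem⟩
  obtain ⟨htd_pos, u0, hu0, hequ⟩ := htd
  have hud := Nat.sInf_mem (⟨u0, hu0, hequ⟩ : {u : ℕ | 0 < u ∧ (td d : ℤ) ^ 2 - d * (u : ℤ) ^ 2 = 4}.Nonempty)
  exact ⟨htd_pos, hud.1, hud.2⟩

/-- **Counting fundamental discriminants with small fundamental unit**: for every `δ > 0`
there is `C_δ > 0` such that for all `X ≥ 2`, the number of positive non-square fundamental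
discriminants `d` with `ε_d ≤ X` is at most `C_δ·X^{1+δ}`. -/
theorem count_fundamental_discriminants (δ : ℝ) (hδ : 0 < δ) :
    ∃ C : ℝ, 0 < C ∧ ∀ X : ℝ, 2 ≤ X →
      (({d : ℕ | 0 < d ∧ ¬IsSquare d ∧ IsFundDisc d ∧ eps (d : ℤ) ≤ X}.ncard : ℝ))
        ≤ C * X ^ (1 + δ) := by
  refine ⟨5, by norm_num, fun X hX => ?_⟩
  set S := {d : ℕ | 0 < d ∧ ¬IsSquare d ∧ IsFundDisc d ∧ eps (d : ℤ) ≤ X} with hS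
  set n : ℕ := ⌊2 * X⌋₊ with hn
  have key : ∀ d ∈ S, 0 < ud (d : ℤ) ∧
      (d : ℤ) * ((ud (d : ℤ) : ℤ)) ^ 2 = ((td (d : ℤ) : ℤ)) ^ 2 - 4 ∧ td (d : ℤ) ≤ n := by
    intro d hd
    obtain ⟨hd0, hdsq, hfd, heps⟩ := hd
    have hd0' : (0 : ℤ) < (d : ℤ) := by exact_mod_cast hd0
    have hdsq' : ¬IsSquare ((d : ℕ) : ℤ) := by
      rintro ⟨r, hr⟩
      exact hdsq ⟨r.natAbs, by have := congrArg Int.natAbs hr; simpa [Int.natAbs_mul] using this⟩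
    obtain ⟨htpos, hupos, heq⟩ := tdud_spec hd0' hdsq'
    refine ⟨hupos, by linarith, ?_⟩
    have h1 : (td (d : ℤ) : ℝ) / 2 ≤ eps (d : ℤ) := by
      unfold eps
      have : 0 ≤ (ud (d : ℤ) : ℝ) * Real.sqrt ((d : ℤ) : ℝ) := by positivity
      linarith
    have h2 : (td (d : ℤ) : ℝ) ≤ 2 * X := by linarith
    exact Nat.le_floor h2
  have hinj : Set.InjOn (fun d : ℕ => (td (d : ℤ), d % 2)) S := by
    intro d1 h1 d2 h2 heq
    simp only [Prod.mk.injEq] at heq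
    obtain ⟨htd, hpar⟩ := heq
    obtain ⟨hu1, he1, -⟩ := key d1 h1
    obtain ⟨hu2, he2, -⟩ := key d2 h2
    have hmain : d1 * ud (d1 : ℤ) ^ 2 = d2 * ud (d2 : ℤ) ^ 2 := by
      have : (d1 : ℤ) * ((ud (d1 : ℤ) : ℤ)) ^ 2 = (d2 : ℤ) * ((ud (d2 : ℤ) : ℤ)) ^ 2 := by
        rw [he1, he2, htd]
      exact_mod_cast this
    obtain ⟨-, -, hfd1, -⟩ := h1
    obtain ⟨-, -, hfd2, -⟩ := h2
    rcases hfd1 with ⟨hsf1, hm1⟩ | ⟨m1, rfl, hsf1, hm1⟩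
    · rcases hfd2 with ⟨hsf2, hm2⟩ | ⟨m2, rfl, hsf2, hm2⟩
      · exact sqf_unique hsf1 hsf2 hu1.ne' hu2.ne' hmain
      · omega
    · rcases hfd2 with ⟨hsf2, hm2⟩ | ⟨m2, rfl, hsf2, hm2⟩
      · omega
      · have : m1 * ud ((4 * m1 : ℕ) : ℤ) ^ 2 = m2 * ud ((4 * m2 : ℕ) : ℤ) ^ 2 := by
          rw [mul_assoc 4 m1, mul_assoc 4 m2] at hmain; omega
        rw [sqf_unique hsf1 hsf2 hu1.ne' hu2.ne' this]
  have hsub : ∀ d ∈ S, (fun d : ℕ => (td (d : ℤ), d % 2)) d ∈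
      ((Finset.range (n + 1) ×ˢ Finset.range 2 : Finset (ℕ × ℕ)) : Set (ℕ × ℕ)) := by
    intro d hd
    obtain ⟨-, -, hle⟩ := key d hd
    simp only [Finset.coe_product, Set.mem_prod, Finset.mem_coe, Finset.mem_range]
    exact ⟨by omega, by omega⟩
  have hcard := Set.ncard_le_ncard_of_injOn _ hsub hinj
    ((Finset.range (n + 1) ×ˢ Finset.range 2 : Finset (ℕ × ℕ)).finite_toSet)
  rw [Set.ncard_coe_finset, Finset.card_product, Finset.card_range, Finset.card_range] at hcard
  have hXpos : (0 : ℝ) < X := by linarith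
  have hfloor : (n : ℝ) ≤ 2 * X := Nat.floor_le (by positivity)
  have hle : (S.ncard : ℝ) ≤ 5 * X := by
    calc (S.ncard : ℝ) ≤ ((n + 1) * 2 : ℕ) := by exact_mod_cast hcard
    _ = 2 * (n : ℝ) + 2 := by push_cast; ring
    _ ≤ 2 * (2 * X) + 2 := by linarith
    _ ≤ 5 * X := by linarith
  calc (S.ncard : ℝ) ≤ 5 * X := hle
  _ ≤ 5 * X ^ (1 + δ) := by
    have h := Real.rpow_le_rpow_of_exponent_le (by linarith : 1 ≤ X)
      (by linarith : (1 : ℝ) ≤ 1 + δ)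
    rw [Real.rpow_one] at h
    linarith
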